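/- arXiv:1811.06189 — 3 statements merged into one kernel-verified Lean document; each statement's English description precedes it below -/
import Mathlib

section
/- If Γ is a move semigroup, then the joined ensemble join(Γ) is again a move semigroup (it is closed under composition and inverse). In particular, for any move ensemble Ω, join(⟨Ω⟩) = ⟨join(⟨Ω⟩)⟩. -/
open Filter Set

noncomputable section

/-- The unrestricted translation (`b = false`) or reflection (`b = true`)
with parameter `p`: `x ↦ x + p`, resp. `x ↦ p - x`. -/
def uEval (b : Bool) (p : ℝ) (x : ℝ) : ℝ := if b then p - x else x + p

/-- A restricted move `γ|_D`: a translation (`isRefl = false`) or a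
reflection (`isRefl = true`) together with a domain. -/
structure Move where
  isRefl : Bool
  param : ℝ
  dom : Set ℝ

namespace Move

def eval (m : Move) : ℝ → ℝ := uEval m.isRefl m.param

/-- The character: `+1` for translations, `-1` for reflections. -/
def chi (m : Move) : ℝ := if m.isRefl then -1 else 1

def image (m : Move) : Set ℝ := m.eval '' m.dom

def graph (m : Move) : Set (ℝ × ℝ) := (fun x => (x, m.eval x)) '' m.dom

/-- Domains of moves must be open intervals or empty. -/
def ValidDom (D : Set ℝ) : Prop := IsOpen D ∧ D.OrdConnected

/-- A valid move: open-interval-or-empty domain; moves with empty domain are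
normalized (`param = 0`), so that there are exactly two empty moves, one of
each character. -/
def Valid (m : Move) : Prop := ValidDom m.dom ∧ (m.dom = ∅ → m.param = 0)

/-- The move `γ|_D` (normalized representative). -/
def mk' (b : Bool) (p : ℝ) (D : Set ℝ) : Move :=
  letI : Decidable (D = ∅) := Classical.dec _
  ⟨b, if D = ∅ then 0 else p, D⟩

/-- Composition of moves: `γ₂|_{D₂} ∘ γ₁|_{D₁} = (γ₂ ∘ γ₁)|_{D₁ ∩ γ₁⁻¹ D₂}`. -/
def comp (m2 m1 : Move) : Move :=
  mk' (m2.isRefl != m1.isRefl)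
    (if m2.isRefl then m2.param - m1.param else m1.param + m2.param)
    (m1.dom ∩ m1.eval ⁻¹' m2.dom)

/-- Inverse of a move: `(γ|_D)⁻¹ = γ⁻¹|_{γ(D)}`. -/
def inv (m : Move) : Move :=
  mk' m.isRefl (if m.isRefl then m.param else -m.param) (m.eval '' m.dom)

/-- The restriction partial order: `m1` is a restriction of `m2`. -/
def le (m1 m2 : Move) : Prop :=
  m1.isRefl = m2.isRefl ∧ m1.dom ⊆ m2.dom ∧ ∀ x ∈ m1.dom, m1.eval x = m2.eval x

end Move

/-- A move ensemble: a set of (valid) moves. -/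
def IsMoveEnsemble (Ω : Set Move) : Prop := ∀ m ∈ Ω, m.Valid

/-- A move semigroup: a move ensemble closed under composition and inverse. -/
def IsMoveSemigroup (Γ : Set Move) : Prop :=
  IsMoveEnsemble Γ ∧ (∀ m1 ∈ Γ, ∀ m2 ∈ Γ, Move.comp m2 m1 ∈ Γ) ∧
    (∀ m ∈ Γ, Move.inv m ∈ Γ)

/-- `⟨Ω⟩`: the smallest move semigroup containing `Ω`. -/
def semi (Ω : Set Move) : Set Move := ⋂₀ {Γ | IsMoveSemigroup Γ ∧ Ω ⊆ Γ}

/-- Axiom (restrict). -/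
def RestrictClosed (Ω : Set Move) : Prop :=
  ∀ m ∈ Ω, ∀ D' : Set ℝ, D' ⊆ m.dom → Move.ValidDom D' →
    Move.mk' m.isRefl m.param D' ∈ Ω

/-- The restriction closure of an ensemble. -/
def restrictCl (Ω : Set Move) : Set Move := ⋂₀ {Γ | RestrictClosed Γ ∧ Ω ⊆ Γ}

/-- Join-closed: restriction-closed and closed under continuation (joins). -/
def JoinClosed (Ω : Set Move) : Prop :=
  RestrictClosed Ω ∧
    ∀ (b : Bool) (p : ℝ) (J : Set (Set ℝ)), J.Nonempty →
      (∀ I ∈ J, Move.mk' b p I ∈ Ω) → (⋃₀ J).OrdConnected →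
      Move.mk' b p (⋃₀ J) ∈ Ω

/-- `join(Ω)`: the smallest join-closed ensemble containing `Ω`. -/
def joinCl (Ω : Set Move) : Set Move := ⋂₀ {Γ | JoinClosed Γ ∧ Ω ⊆ Γ}

/-- `joinsemi(Ω) = join(⟨Ω⟩)`: the joined move semigroup generated by `Ω`. -/
def joinsemi (Ω : Set Move) : Set Move := joinCl (semi Ω)

/-- `θ` respects the move `γ|_D`: `θ(γ(x)) = χ(γ)·θ(x) + c` on `D`. -/
def Respects (θ : ℝ → ℝ) (m : Move) : Prop :=
  ∃ c : ℝ, ∀ x ∈ m.dom, θ (m.eval x) = m.chi * θ x + c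

/-- `θ` respects each move of the ensemble `Ω`. -/
def RespectsAll (θ : ℝ → ℝ) (Ω : Set Move) : Prop := ∀ m ∈ Ω, Respects θ m

/-- All translation moves with graph contained in `O`. -/
def tMoves (O : Set (ℝ × ℝ)) : Set Move :=
  {m | m.isRefl = false ∧ m.Valid ∧ m.graph ⊆ O}

/-- All reflection moves with graph contained in `O`. -/
def rMoves (O : Set (ℝ × ℝ)) : Set Move :=
  {m | m.isRefl = true ∧ m.Valid ∧ m.graph ⊆ O}

/-- All moves with graph contained in `O`. -/
def movesIn (O : Set (ℝ × ℝ)) : Set Move := {m | m.Valid ∧ m.graph ⊆ O}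

/-- Translation moves graph of an ensemble. -/
def grPlus (Ω : Set Move) : Set (ℝ × ℝ) :=
  {q | ∃ m ∈ Ω, m.isRefl = false ∧ q ∈ m.graph}

/-- Reflection moves graph of an ensemble. -/
def grMinus (Ω : Set Move) : Set (ℝ × ℝ) :=
  {q | ∃ m ∈ Ω, m.isRefl = true ∧ q ∈ m.graph}

/-- `dom(O)`: union of the domains of the moves in `movesIn O`. -/
def domOf (O : Set (ℝ × ℝ)) : Set ℝ := {x | ∃ m ∈ movesIn O, x ∈ m.dom}

/-- `im(O)`: union of the images of the moves in `movesIn O`. -/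
def imOf (O : Set (ℝ × ℝ)) : Set ℝ := {x | ∃ m ∈ movesIn O, x ∈ m.image}

/-- domain of a move ensemble. -/
def domEns (Ω : Set Move) : Set ℝ := {x | ∃ m ∈ Ω, x ∈ m.dom}

/-- image of a move ensemble. -/
def imEns (Ω : Set Move) : Set ℝ := {x | ∃ m ∈ Ω, x ∈ m.image}

/-- Convergence of a sequence of unrestricted moves (character, parameter):
all but finitely many have character `b`, and the parameters tend to `p`. -/
def ConvergesTo (γ : ℕ → Bool × ℝ) (b : Bool) (p : ℝ) : Prop :=
  (∀ᶠ i in atTop, (γ i).1 = b) ∧ Tendsto (fun i => (γ i).2) atTop (nhds p)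

/-- Axiom (lim): fixed-domain limits of moves. -/
def LimClosed (Ω : Set Move) : Prop :=
  ∀ D : Set ℝ, Move.ValidDom D →
    ∀ (γ : ℕ → Bool × ℝ) (b : Bool) (p : ℝ), ConvergesTo γ b p →
      (∀ i, Move.mk' (γ i).1 (γ i).2 D ∈ Ω) → Move.mk' b p D ∈ Ω

/-- `lim(Ω)`: the smallest superset of `Ω` satisfying (lim). -/
def limCl (Ω : Set Move) : Set Move := ⋂₀ {Γ | LimClosed Γ ∧ Ω ⊆ Γ}

/-- Axiom (arblim): limits of moves with converging domains. -/
def ArbLimClosed (Ω : Set Move) : Prop :=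
  ∀ (γ : ℕ → Bool × ℝ) (b : Bool) (p : ℝ) (l u : ℕ → ℝ) (l₀ u₀ : ℝ),
    ConvergesTo γ b p → Tendsto l atTop (nhds l₀) → Tendsto u atTop (nhds u₀) →
    (∀ i, Move.mk' (γ i).1 (γ i).2 (Set.Ioo (l i) (u i)) ∈ Ω) →
    Move.mk' b p (Set.Ioo l₀ u₀) ∈ Ω

/-- `arblim(Ω)`: the smallest superset of `Ω` satisfying (arblim). -/
def arblimCl (Ω : Set Move) : Set Move := ⋂₀ {Γ | ArbLimClosed Γ ∧ Ω ⊆ Γ}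

/-- Axiom (kaleido). -/
def Kaleidoscopic (Ω : Set Move) : Prop :=
  ∀ D I : Set ℝ, Move.ValidDom D → Move.ValidDom I →
    (tMoves (D ×ˢ I) ⊆ Ω ↔ rMoves (D ×ˢ I) ⊆ Ω)

/-- Axiom (extend_A): continuous domain extension relative to the open set `A`. -/
def ExtendClosed (A : Set ℝ) (Ω : Set Move) : Prop :=
  ∀ (b : Bool) (p : ℝ) (J : Set (Set ℝ)) (D : Set ℝ), J.Nonempty →
    (∀ I ∈ J, Move.mk' b p I ∈ Ω) → Move.ValidDom D →
    D ⊆ closure (⋃₀ J) ∩ A ∩ uEval b p ⁻¹' A →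
    Move.mk' b p D ∈ Ω

/-- `joinextend_A(Ω)`: the smallest superset of `Ω` satisfying (extend_A). -/
def joinExtendCl (A : Set ℝ) (Ω : Set Move) : Set Move :=
  ⋂₀ {Γ | ExtendClosed A Γ ∧ Ω ⊆ Γ}

/-- A closed move semigroup with respect to the open set `A`. -/
def ClosedMoveSemigroup (A : Set ℝ) (Γ : Set Move) : Prop :=
  IsMoveSemigroup Γ ∧ JoinClosed Γ ∧ Kaleidoscopic Γ ∧ LimClosed Γ ∧
    ExtendClosed A Γ

/-- The moves closure `ctscl(Ω)`: the smallest closed move semigroup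
(with respect to `A`) containing `Ω`. -/
def ctscl (A : Set ℝ) (Ω : Set Move) : Set Move :=
  ⋂₀ {Γ | ClosedMoveSemigroup A Γ ∧ Ω ⊆ Γ}

/-- The set of maximal elements of `Ω` in the restriction partial order. -/
def MaxOf (Ω : Set Move) : Set Move :=
  {m ∈ Ω | ∀ m' ∈ Ω, Move.le m m' → Move.le m' m}

/-! The inverse of a move, and its composite with a fixed move, depend on the domain of the
move only through a map of domains that commutes with unions and preserves open intervals, so
they send restrictions and joins to restrictions and joins. Hence the moves of `join(Γ)` whose
image under such an operation lies in `join(Γ)` form a join-closed ensemble, which is all of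
`join(Γ)` once it contains `Γ`. For composition this is applied twice: with a fixed move of `Γ`,
then with a fixed move of `join(Γ)`. -/

namespace Move

@[simp]
lemma mk'_isRefl (b : Bool) (p : ℝ) (D : Set ℝ) : (mk' b p D).isRefl = b := rfl

@[simp]
lemma mk'_dom (b : Bool) (p : ℝ) (D : Set ℝ) : (mk' b p D).dom = D := rfl

lemma mk'_empty (b : Bool) (p q : ℝ) : mk' b p ∅ = mk' b q ∅ := by
  simp [mk']

lemma mk'_restrict (b : Bool) (p : ℝ) {D D' : Set ℝ} (h : D' ⊆ D) :
    mk' (mk' b p D).isRefl (mk' b p D).param D' = mk' b p D' := by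
  by_cases hD' : D' = ∅
  · subst hD'
    exact mk'_empty _ _ _
  · have hD : D ≠ ∅ := fun hD => hD' (subset_empty_iff.1 (hD ▸ h))
    simp [mk', hD]

lemma valid_mk' (b : Bool) (p : ℝ) {D : Set ℝ} (hD : ValidDom D) : (mk' b p D).Valid :=
  ⟨hD, fun h => by simp [mk', show D = ∅ from h]⟩

lemma ValidDom.inter {D E : Set ℝ} (hD : ValidDom D) (hE : ValidDom E) : ValidDom (D ∩ E) :=
  ⟨hD.1.inter hE.1, hD.2.inter hE.2⟩

end Move

open Move

lemma continuous_uEval (b : Bool) (p : ℝ) : Continuous (uEval b p) := by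
  cases b
  · exact continuous_add_const p
  · exact continuous_sub_left p

lemma monotone_or_antitone_uEval (b : Bool) (p : ℝ) :
    Monotone (uEval b p) ∨ Antitone (uEval b p) := by
  cases b
  · exact Or.inl fun x y h => add_le_add_left h p
  · exact Or.inr fun x y h => sub_le_sub_left h p

lemma image_uEval_eq_preimage (b : Bool) (p : ℝ) (D : Set ℝ) :
    uEval b p '' D = uEval b (if b then p else -p) ⁻¹' D :=
  congrFun (image_eq_preimage_of_inverse (fun x => by cases b <;> simp [uEval])
    (fun x => by cases b <;> simp [uEval])) D

lemma Set.OrdConnected.preimage_uEval {D : Set ℝ} (hD : D.OrdConnected) (b : Bool) (p : ℝ) :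
    (uEval b p ⁻¹' D).OrdConnected :=
  (monotone_or_antitone_uEval b p).elim hD.preimage_mono hD.preimage_anti

lemma Move.ValidDom.preimage_uEval {D : Set ℝ} (hD : ValidDom D) (b : Bool) (p : ℝ) :
    ValidDom (uEval b p ⁻¹' D) :=
  ⟨hD.1.preimage (continuous_uEval b p), hD.2.preimage_uEval b p⟩

lemma Move.ValidDom.image_uEval {D : Set ℝ} (hD : ValidDom D) (b : Bool) (p : ℝ) :
    ValidDom (uEval b p '' D) := by
  rw [image_uEval_eq_preimage]
  exact hD.preimage_uEval _ _

lemma isMoveSemigroup_setOf_valid : IsMoveSemigroup {m : Move | m.Valid} :=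
  ⟨fun _ hm => hm,
    fun _ h1 _ h2 => valid_mk' _ _ (h1.1.inter (h2.1.preimage_uEval _ _)),
    fun _ hm => valid_mk' _ _ (hm.1.image_uEval _ _)⟩

lemma joinClosed_setOf_valid : JoinClosed {m : Move | m.Valid} :=
  ⟨fun _ _ _ _ hD' => valid_mk' _ _ hD',
    fun _ _ _ _ hJ hord => valid_mk' _ _ ⟨isOpen_sUnion fun I hI => (hJ I hI).1.1, hord⟩⟩

section joinCl

variable {Γ : Set Move}

lemma subset_joinCl (Γ : Set Move) : Γ ⊆ joinCl Γ :=
  fun _ hm _ hS => hS.2 hm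

lemma joinCl_subset {S : Set Move} (hS : JoinClosed S) (hΓS : Γ ⊆ S) : joinCl Γ ⊆ S :=
  sInter_subset_of_mem ⟨hS, hΓS⟩

lemma joinClosed_joinCl (Γ : Set Move) : JoinClosed (joinCl Γ) :=
  ⟨fun m hm D' hD' hvalid S hS => hS.1.1 m (hm S hS) D' hD' hvalid,
    fun b p J hJ hmem hord S hS => hS.1.2 b p J hJ (fun I hI => hmem I hI S hS) hord⟩

lemma mk'_mem_joinCl_of_subset {b : Bool} {p : ℝ} {D D' : Set ℝ} (h : mk' b p D ∈ joinCl Γ)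
    (hD' : D' ⊆ D) (hvalid : ValidDom D') : mk' b p D' ∈ joinCl Γ :=
  mk'_restrict b p hD' ▸ (joinClosed_joinCl Γ).1 _ h D' hD' hvalid

lemma IsMoveEnsemble.joinCl (hΓ : IsMoveEnsemble Γ) : IsMoveEnsemble (joinCl Γ) :=
  fun _ hm => joinCl_subset joinClosed_setOf_valid hΓ hm

theorem mapsTo_joinCl_of_mapsTo {F : Move → Move} (c : Bool → Bool) (q : Bool → ℝ → ℝ)
    (T : Bool → ℝ → Set ℝ → Set ℝ)
    (hF : ∀ m, F m = mk' (c m.isRefl) (q m.isRefl m.param) (T m.isRefl m.param m.dom))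
    (hT : ∀ b p J, T b p (⋃₀ J) = ⋃₀ (T b p '' J))
    (hopen : ∀ b p D, IsOpen D → IsOpen (T b p D))
    (hord : ∀ b p D, D.OrdConnected → (T b p D).OrdConnected)
    (hΓ : MapsTo F Γ (joinCl Γ)) : MapsTo F (joinCl Γ) (joinCl Γ) := by
  have hT_mono : ∀ b p, Monotone (T b p) := fun b p D E hDE => by
    have hDE' := hT b p {D, E}
    rw [sUnion_pair, union_eq_right.2 hDE, image_pair, sUnion_pair] at hDE'
    exact hDE' ▸ subset_union_left
  have hF_mk' : ∀ b p D, F (mk' b p D) = mk' (c b) (q b p) (T b p D) := by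
    intro b p D
    by_cases hD : D = ∅
    · have hT_empty : ∀ p, T b p ∅ = ∅ := fun p => by simpa using hT b p ∅
      simp only [hF, mk'_isRefl, mk'_dom, hD, hT_empty]
      exact mk'_empty _ _ _
    · simp [hF, mk', hD]
  suffices h : JoinClosed {m | m ∈ joinCl Γ ∧ F m ∈ joinCl Γ} from
    fun m hm => (joinCl_subset h (fun m hm => ⟨subset_joinCl Γ hm, hΓ hm⟩) hm).2
  refine ⟨?_, ?_⟩
  · rintro m ⟨hm, hFm⟩ D' hD' hvalid
    refine ⟨(joinClosed_joinCl Γ).1 m hm D' hD' hvalid, ?_⟩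
    rw [hF_mk']
    rw [hF] at hFm
    exact mk'_mem_joinCl_of_subset hFm (hT_mono _ _ hD') ⟨hopen _ _ _ hvalid.1, hord _ _ _ hvalid.2⟩
  · rintro b p J hJ hmem hJord
    refine ⟨(joinClosed_joinCl Γ).2 b p J hJ (fun I hI => (hmem I hI).1) hJord, ?_⟩
    rw [hF_mk', hT]
    refine (joinClosed_joinCl Γ).2 _ _ _ (hJ.image _) ?_ (hT b p J ▸ hord _ _ _ hJord)
    rintro _ ⟨I, hI, rfl⟩
    simpa only [hF_mk'] using (hmem I hI).2

lemma mapsTo_inv_joinCl (h : MapsTo inv Γ (joinCl Γ)) : MapsTo inv (joinCl Γ) (joinCl Γ) :=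
  mapsTo_joinCl_of_mapsTo id (fun b p => if b then p else -p) (fun b p D => uEval b p '' D)
    (fun _ => rfl) (fun _ _ _ => image_sUnion)
    (fun b p D hD => by rw [image_uEval_eq_preimage]; exact hD.preimage (continuous_uEval _ _))
    (fun b p D hD => by rw [image_uEval_eq_preimage]; exact hD.preimage_uEval _ _) h

lemma mapsTo_comp_right_joinCl {m₁ : Move} (hm₁ : ValidDom m₁.dom)
    (h : MapsTo (comp · m₁) Γ (joinCl Γ)) : MapsTo (comp · m₁) (joinCl Γ) (joinCl Γ) :=
  mapsTo_joinCl_of_mapsTo (· != m₁.isRefl) (fun b p => if b then p - m₁.param else m₁.param + p)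
    (fun _ _ D => m₁.dom ∩ m₁.eval ⁻¹' D) (fun _ => rfl)
    (fun _ _ J => by rw [preimage_sUnion, inter_iUnion₂, sUnion_image])
    (fun _ _ _ hD => hm₁.1.inter (hD.preimage (continuous_uEval _ _)))
    (fun _ _ _ hD => hm₁.2.inter (hD.preimage_uEval _ _)) h

lemma mapsTo_comp_left_joinCl {m₂ : Move} (hm₂ : ValidDom m₂.dom)
    (h : MapsTo (comp m₂) Γ (joinCl Γ)) : MapsTo (comp m₂) (joinCl Γ) (joinCl Γ) :=
  mapsTo_joinCl_of_mapsTo (m₂.isRefl != ·)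
    (fun _ p => if m₂.isRefl then m₂.param - p else p + m₂.param)
    (fun b p D => D ∩ uEval b p ⁻¹' m₂.dom) (fun _ => rfl)
    (fun _ _ J => by rw [sUnion_eq_biUnion, iUnion₂_inter, sUnion_image])
    (fun b p _ hD => hD.inter (hm₂.1.preimage (continuous_uEval b p)))
    (fun b p _ hD => hD.inter (hm₂.2.preimage_uEval b p)) h

theorem isMoveSemigroup_joinCl (hΓ : IsMoveSemigroup Γ) : IsMoveSemigroup (joinCl Γ) := by
  obtain ⟨hens, hcomp, hinv⟩ := hΓ
  have hcomp_Γ : ∀ m₁ ∈ Γ, MapsTo (comp · m₁) (joinCl Γ) (joinCl Γ) := fun m₁ hm₁ =>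
    mapsTo_comp_right_joinCl (hens m₁ hm₁).1 fun m₂ hm₂ => subset_joinCl Γ (hcomp m₁ hm₁ m₂ hm₂)
  refine ⟨hens.joinCl, fun m₁ hm₁ m₂ hm₂ => ?_,
    mapsTo_inv_joinCl fun m hm => subset_joinCl Γ (hinv m hm)⟩
  exact mapsTo_comp_left_joinCl (hens.joinCl m₂ hm₂).1 (fun m hm => hcomp_Γ m hm hm₂) hm₁

end joinCl

lemma isMoveSemigroup_semi {Ω : Set Move} (hΩ : IsMoveEnsemble Ω) : IsMoveSemigroup (semi Ω) :=
  ⟨fun _ hm => hm _ ⟨isMoveSemigroup_setOf_valid, hΩ⟩,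
    fun _ h₁ _ h₂ S hS => hS.1.2.1 _ (h₁ S hS) _ (h₂ S hS),
    fun _ hm S hS => hS.1.2.2 _ (hm S hS)⟩

lemma semi_eq_self {Γ : Set Move} (hΓ : IsMoveSemigroup Γ) : semi Γ = Γ :=
  Subset.antisymm (sInter_subset_of_mem (t := Γ) ⟨hΓ, subset_rfl⟩) fun _ hm _ hS => hS.2 hm

/-- The joined ensemble of a move semigroup is again a move semigroup;
in particular `join(⟨Ω⟩) = ⟨join(⟨Ω⟩)⟩` for every move ensemble `Ω`. -/
theorem joinCl_isMoveSemigroup :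
    (∀ Γ : Set Move, IsMoveSemigroup Γ → IsMoveSemigroup (joinCl Γ)) ∧
    (∀ Ω : Set Move, IsMoveEnsemble Ω →
      joinCl (semi Ω) = semi (joinCl (semi Ω))) :=
  ⟨fun _ => isMoveSemigroup_joinCl,
    fun _ hΩ => (semi_eq_self (isMoveSemigroup_joinCl (isMoveSemigroup_semi hΩ))).symm⟩
end
end

section
/- Let θ : ℝ → ℝ be a bounded function that respects a move ensemble Ω, and let C ⊆ ℝ be an open set that is a connected covered component of Ω, i.e., moves(C × C) ⊆ Ω. Then there exists a common slope s ∈ ℝ such that θ is affine with slope s on every open interval contained in C. -/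
open Filter Set

noncomputable section

/-!
Translations within `C × C` are moves of `Ω`. Hence near a point `x` of an open interval in `C`
the increments `u ↦ θ (x + u) - θ x` satisfy Cauchy's equation for small `u`; being bounded,
they are linear, so `θ` is differentiable at `x`. Translating a neighbourhood of one such point
onto a neighbourhood of another shows that all these derivatives agree, and a function with
constant derivative `s` on an open interval is affine there with slope `s`.
-/

open Metric

def IsAdditiveNearZero (F : ℝ → ℝ) (ε : ℝ) : Prop :=
  ∀ t u, |t| < ε → |u| < ε → |t + u| < ε → F (t + u) = F t + F u

/-- `n * F (t / n)` with `n = ⌊|t| / ε⌋₊ + 1`; any `n` with `|t / n| < ε` gives the same value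
when `F` is additive near `0` (`IsAdditiveNearZero.additiveExtension_eq`). -/
def additiveExtension (F : ℝ → ℝ) (ε t : ℝ) : ℝ :=
  (⌊|t| / ε⌋₊ + 1 : ℕ) * F (t / (⌊|t| / ε⌋₊ + 1 : ℕ))

lemma abs_div_natCast_lt_iff {t ε : ℝ} {n : ℕ} (hn : 0 < n) : |t / n| < ε ↔ |t| < n * ε := by
  rw [abs_div, Nat.abs_cast, div_lt_iff₀ (by exact_mod_cast hn), mul_comm]

lemma lt_floor_div_add_one_mul (t : ℝ) {ε : ℝ} (hε : 0 < ε) :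
    t < ((⌊t / ε⌋₊ + 1 : ℕ) : ℝ) * ε := by
  rw [← div_lt_iff₀ hε]
  exact_mod_cast Nat.lt_floor_add_one (t / ε)

namespace IsAdditiveNearZero

variable {F : ℝ → ℝ} {ε : ℝ}

lemma map_natCast_mul (h : IsAdditiveNearZero F ε) (n : ℕ) {u : ℝ} (hu : |n * u| < ε) :
    F (n * u) = n * F u := by
  induction n with
  | zero =>
    have h0 : |(0 : ℝ)| < ε := by simpa using hu
    simpa using h 0 0 h0 h0 (by simpa using h0)
  | succ n ih =>
    have hu' : |u| + n * |u| < ε := by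
      rw [abs_mul, abs_of_nonneg (by positivity : (0 : ℝ) ≤ (n + 1 : ℕ))] at hu
      push_cast at hu
      linarith
    have hnu : |n * u| < ε := by
      rw [abs_mul, Nat.abs_cast]; linarith [abs_nonneg u]
    have hu1 : |u| < ε := by
      linarith [mul_nonneg (Nat.cast_nonneg n : (0 : ℝ) ≤ n) (abs_nonneg u)]
    push_cast at hu ⊢
    rw [add_mul, one_mul] at hu ⊢
    rw [h _ _ hnu hu1 hu, ih hnu]
    ring

lemma natCast_mul_div_eq (h : IsAdditiveNearZero F ε) {m n : ℕ} (hm : 0 < m) (hn : 0 < n)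
    {t : ℝ} (htm : |t| < m * ε) (htn : |t| < n * ε) :
    m * F (t / m) = n * F (t / n) := by
  have hcommon : ∀ {m n : ℕ}, 0 < m → 0 < n → |t| < m * ε →
      m * F (t / m) = (m * n : ℕ) * F (t / (m * n : ℕ)) := by
    intro m n hm hn htm
    have hsplit : t / m = n * (t / (m * n : ℕ)) := by
      push_cast; field_simp
    rw [hsplit, h.map_natCast_mul n (by rwa [← hsplit, abs_div_natCast_lt_iff hm])]
    push_cast; ring
  rw [hcommon hm hn htm, hcommon hn hm htn, mul_comm m n]

lemma additiveExtension_eq (h : IsAdditiveNearZero F ε) (hε : 0 < ε) {n : ℕ} (hn : 0 < n)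
    {t : ℝ} (ht : |t| < n * ε) : additiveExtension F ε t = n * F (t / n) :=
  h.natCast_mul_div_eq (Nat.succ_pos _) hn (lt_floor_div_add_one_mul |t| hε) ht

lemma additiveExtension_add (h : IsAdditiveNearZero F ε) (hε : 0 < ε) (t u : ℝ) :
    additiveExtension F ε (t + u) = additiveExtension F ε t + additiveExtension F ε u := by
  set n : ℕ := ⌊(|t| + |u|) / ε⌋₊ + 1
  have hn : 0 < n := Nat.succ_pos _
  have hsum : |t| + |u| < n * ε := lt_floor_div_add_one_mul _ hε
  have ht : |t| < n * ε := by linarith [abs_nonneg u]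
  have hu : |u| < n * ε := by linarith [abs_nonneg t]
  have htu : |t + u| < n * ε := (abs_add_le t u).trans_lt hsum
  rw [h.additiveExtension_eq hε hn ht, h.additiveExtension_eq hε hn hu,
    h.additiveExtension_eq hε hn htu, add_div,
    h _ _ ((abs_div_natCast_lt_iff hn).2 ht) ((abs_div_natCast_lt_iff hn).2 hu)
      (by rwa [← add_div, abs_div_natCast_lt_iff hn]), mul_add]

/-- The additive extension is bounded near `0`, hence continuous, hence `ℝ`-linear. -/
theorem exists_eq_mul (h : IsAdditiveNearZero F ε) (hε : 0 < ε) {M : ℝ}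
    (hbd : ∀ t, |t| < ε → |F t| ≤ M) : ∃ s, ∀ t, |t| < ε → F t = s * t := by
  let G : ℝ →+ ℝ := AddMonoidHom.mk' (additiveExtension F ε) (h.additiveExtension_add hε)
  have hGF : ∀ t, |t| < ε → G t = F t := fun t ht => by
    simpa [G] using h.additiveExtension_eq hε one_pos (t := t) (by simpa using ht)
  have hG : Continuous G := by
    refine G.continuous_of_isBounded_nhds_zero (ball_mem_nhds 0 hε)
      ((isBounded_closedBall (x := (0 : ℝ)) (r := M)).subset ?_)
    rintro _ ⟨t, ht, rfl⟩
    rw [mem_ball, dist_zero_right, Real.norm_eq_abs] at ht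
    rw [mem_closedBall, dist_zero_right, Real.norm_eq_abs, hGF t ht]
    exact hbd t ht
  refine ⟨G 1, fun t ht => ?_⟩
  rw [← hGF t ht, mul_comm, ← smul_eq_mul, ← map_real_smul G hG, smul_eq_mul, mul_one]

end IsAdditiveNearZero

lemma hasDerivAt_of_forall_abs_lt {f : ℝ → ℝ} {x s r : ℝ} (hr : 0 < r)
    (h : ∀ u, |u| < r → f (x + u) = f x + s * u) : HasDerivAt f s x := by
  have hlin : HasDerivAt (fun y => f x + s * (y - x)) s x := by
    simpa using (((hasDerivAt_id x).sub_const x).const_mul s).const_add (f x)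
  refine hlin.congr_of_eventuallyEq ?_
  filter_upwards [ball_mem_nhds x hr] with y hy
  rw [mem_ball, Real.dist_eq] at hy
  simpa using h (y - x) hy

namespace RespectsAll

variable {θ : ℝ → ℝ} {C : Set ℝ}

lemma sub_eq_sub_of_ball_subset (hresp : RespectsAll θ (movesIn (C ×ˢ C))) {x t r u : ℝ}
    (hx : ball x r ⊆ C) (hxt : ball (x + t) r ⊆ C) (hu : |u| < r) :
    θ (x + t + u) - θ (x + t) = θ (x + u) - θ x := by
  have hxu : x + u ∈ ball x r := by simpa [Real.dist_eq] using hu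
  let m : Move := ⟨false, t, ball x r⟩
  have hm : m ∈ movesIn (C ×ˢ C) := by
    refine ⟨⟨⟨isOpen_ball, by simp only [m, Real.ball_eq_Ioo]; exact ordConnected_Ioo⟩,
      fun h => absurd h (nonempty_of_mem hxu).ne_empty⟩, ?_⟩
    rintro _ ⟨z, hz, rfl⟩
    refine ⟨hx hz, hxt ?_⟩
    simpa [m, Move.eval, uEval, Real.dist_eq] using hz
  obtain ⟨c, hc⟩ := hresp m hm
  have h₁ := hc (x + u) hxu
  have h₂ := hc x (mem_ball_self ((abs_nonneg u).trans_lt hu))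
  simp only [m, Move.eval, Move.chi, uEval, Bool.false_eq_true, if_false, one_mul] at h₁ h₂
  rw [add_right_comm]
  linarith

lemma exists_local_slope (hresp : RespectsAll θ (movesIn (C ×ˢ C))) {M : ℝ}
    (hθ : ∀ x, |θ x| ≤ M) {x ε : ℝ} (hε : 0 < ε) (hx : ball x ε ⊆ C) :
    ∃ s, ∀ u, |u| < ε / 2 → θ (x + u) = θ x + s * u := by
  have hadd : IsAdditiveNearZero (fun u => θ (x + u) - θ x) (ε / 2) := by
    intro t u ht hu _
    have hxt : ball (x + t) (ε / 2) ⊆ C := (ball_subset_ball' (by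
      rw [Real.dist_eq, add_sub_cancel_left]; linarith)).trans hx
    have := hresp.sub_eq_sub_of_ball_subset ((ball_subset_ball (by linarith)).trans hx) hxt hu
    simp only [← add_assoc]
    linarith
  have hbd : ∀ u, |u| < ε / 2 → |θ (x + u) - θ x| ≤ 2 * M := fun u _ => by
    linarith [abs_sub (θ (x + u)) (θ x), hθ (x + u), hθ x]
  obtain ⟨s, hs⟩ := hadd.exists_eq_mul (half_pos hε) hbd
  exact ⟨s, fun u hu => by linarith [hs u hu]⟩

/-- Slopes propagate: translating a neighbourhood of `x₀` onto one of `x` is a move of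
`C × C`, so `θ` has the same increments near both points. -/
lemma hasDerivAt_of_local_slope (hresp : RespectsAll θ (movesIn (C ×ˢ C))) {M : ℝ}
    (hθ : ∀ x, |θ x| ≤ M) {x₀ r₀ s : ℝ} (hr₀ : 0 < r₀) (hx₀ : ball x₀ r₀ ⊆ C)
    (hs : ∀ u, |u| < r₀ → θ (x₀ + u) = θ x₀ + s * u) {x ε : ℝ} (hε : 0 < ε)
    (hx : ball x ε ⊆ C) : HasDerivAt θ s x := by
  obtain ⟨s', hs'⟩ := hresp.exists_local_slope hθ hε hx
  set r := min r₀ (ε / 2)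
  have hr : 0 < r := lt_min hr₀ (half_pos hε)
  have hr₂ : |r / 2| < r := by rw [abs_of_pos (half_pos hr)]; exact half_lt_self hr
  have hincr := hresp.sub_eq_sub_of_ball_subset (t := x - x₀)
    ((ball_subset_ball (min_le_left _ _)).trans hx₀)
    (by rw [add_sub_cancel]; exact (ball_subset_ball ((min_le_right _ _).trans
      (half_le_self hε.le))).trans hx) hr₂
  rw [add_sub_cancel, hs' _ (hr₂.trans_le (min_le_right _ _)),
    hs _ (hr₂.trans_le (min_le_left _ _))] at hincr
  have hss' : s' = s := mul_right_cancel₀ (half_pos hr).ne' (by linarith)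
  exact hasDerivAt_of_forall_abs_lt (half_pos hε) (hss' ▸ hs')

end RespectsAll

theorem affine_on_connected_covered_component_general (θ : ℝ → ℝ)
    (hθ : ∃ M : ℝ, ∀ x, |θ x| ≤ M)
    (Ω : Set Move) (hresp : RespectsAll θ Ω)
    (C : Set ℝ) (hcov : movesIn (C ×ˢ C) ⊆ Ω) :
    ∃ s : ℝ, ∀ D : Set ℝ, D ⊆ C → Move.ValidDom D →
      ∃ b : ℝ, ∀ x ∈ D, θ x = s * x + b := by
  obtain ⟨M, hM⟩ := hθ
  have hC : RespectsAll θ (movesIn (C ×ˢ C)) := fun m hm => hresp m (hcov hm)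
  rcases (interior C).eq_empty_or_nonempty with hC₀ | ⟨x₀, hx₀⟩
  · refine ⟨0, fun D hDC hD => ⟨0, fun x hx => ?_⟩⟩
    have := hD.1.subset_interior_iff.2 hDC hx
    simp [hC₀] at this
  obtain ⟨r₀, hr₀, hx₀C⟩ := Metric.mem_nhds_iff.1 (mem_interior_iff_mem_nhds.1 hx₀)
  obtain ⟨s, hs⟩ := hC.exists_local_slope hM hr₀ hx₀C
  refine ⟨s, fun D hDC hD => ?_⟩
  have hderiv : ∀ x ∈ D, HasDerivAt θ s x := fun x hx => by
    obtain ⟨ε, hε, hxD⟩ := Metric.isOpen_iff.1 hD.1 x hx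
    exact hC.hasDerivAt_of_local_slope hM (half_pos hr₀)
      ((ball_subset_ball (half_le_self hr₀.le)).trans hx₀C) hs hε (hxD.trans hDC)
  obtain ⟨b, hb⟩ := hD.1.exists_eq_add_of_deriv_eq hD.2.isPreconnected (g := fun x => s * x)
    (fun x hx => (hderiv x hx).differentiableAt.differentiableWithinAt)
    (by fun_prop) (fun x hx => by simp [(hderiv x hx).deriv])
  exact ⟨b, hb⟩

/-- A bounded function respecting a move ensemble is affine with one common
slope on every open interval of a connected covered component. -/
theorem affine_on_connected_covered_component (θ : ℝ → ℝ)
    (hθ : ∃ M : ℝ, ∀ x, |θ x| ≤ M)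
    (Ω : Set Move) (hΩ : IsMoveEnsemble Ω) (hresp : RespectsAll θ Ω)
    (C : Set ℝ) (hCopen : IsOpen C) (hcov : movesIn (C ×ˢ C) ⊆ Ω) :
    ∃ s : ℝ, ∀ D : Set ℝ, D ⊆ C → Move.ValidDom D →
      ∃ b : ℝ, ∀ x ∈ D, θ x = s * x + b :=
  affine_on_connected_covered_component_general θ hθ Ω hresp C hcov
end
end

section
/- Limits of respected moves: Let D be an open interval and let θ : ℝ → ℝ be continuous on D. If γ^i is a sequence of unrestricted moves converging to an unrestricted move γ such that θ respects γ^i|_D for all i, then θ also respects γ|_D. -/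
open Filter Set

noncomputable section

/-!
Eventually the `γ^i` have the character `χ` of `γ`, and the point `y^i = x ∓ (p^i - p)`
(`-` for translations, `+` for reflections) satisfies `γ^i(y^i) = γ(x)`, with `y^i → x`.
Respecting `γ^i|_D` with constant `c^i` then reads `θ(γ x) = χ θ(y^i) + c^i`, so by continuity
of `θ` the constants `c^i` converge to `θ(γ x) - χ θ(x)` for every `x ∈ D`. Uniqueness of limits
makes this value independent of `x`, and it is the constant for `γ|_D`.
-/

def uShift (b : Bool) (p q : ℝ) : ℝ := if b then q - p else p - q

lemma uEval_add_uShift (b : Bool) (p q x : ℝ) : uEval b q (x + uShift b p q) = uEval b p x := by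
  cases b <;> simp only [uEval, uShift, Bool.false_eq_true, if_true, if_false] <;> ring

lemma tendsto_uShift {α : Type*} {l : Filter α} (b : Bool) {p : ℝ} {q : α → ℝ}
    (hq : Tendsto q l (nhds p)) : Tendsto (fun a => uShift b p (q a)) l (nhds 0) := by
  cases b
  · simpa [uShift] using hq.const_sub p
  · simpa [uShift] using hq.sub_const p

lemma respects_mk'_iff (θ : ℝ → ℝ) (b : Bool) (p : ℝ) (D : Set ℝ) :
    Respects θ (Move.mk' b p D) ↔
      ∃ c : ℝ, ∀ x ∈ D, θ (uEval b p x) = (if b then -1 else 1) * θ x + c := by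
  rcases D.eq_empty_or_nonempty with rfl | hD
  · simp [Respects, Move.mk']
  · simp [Respects, Move.mk', Move.eval, Move.chi, hD.ne_empty]

lemma exists_forall_eq_of_tendsto {ι X Y : Type*} [TopologicalSpace Y] [T2Space Y] [Nonempty Y]
    {l : Filter ι} [l.NeBot] {c : ι → Y} {f : X → Y} {D : Set X}
    (h : ∀ x ∈ D, Tendsto c l (nhds (f x))) : ∃ a, ∀ x ∈ D, f x = a := by
  rcases D.eq_empty_or_nonempty with rfl | ⟨x₀, hx₀⟩
  · exact ⟨Classical.arbitrary Y, by simp⟩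
  · exact ⟨f x₀, fun x hx => tendsto_nhds_unique (h x hx) (h x₀ hx₀)⟩

lemma ConvergesTo.tendsto_respects_const {γ : ℕ → Bool × ℝ} {b : Bool} {p : ℝ}
    (hconv : ConvergesTo γ b p) {θ : ℝ → ℝ} {D : Set ℝ} (hD : IsOpen D)
    (hθ : ContinuousOn θ D) {c : ℕ → ℝ}
    (hc : ∀ i, ∀ x ∈ D, θ (uEval (γ i).1 (γ i).2 x) = (if (γ i).1 then -1 else 1) * θ x + c i)
    {x : ℝ} (hx : x ∈ D) :
    Tendsto c atTop (nhds (θ (uEval b p x) - (if b then -1 else 1) * θ x)) := by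
  set y : ℕ → ℝ := fun i => x + uShift b p (γ i).2
  have hy : Tendsto y atTop (nhds x) := by
    simpa using tendsto_const_nhds.add (tendsto_uShift b hconv.2)
  have hyD : ∀ᶠ i in atTop, y i ∈ D := hy.eventually (hD.mem_nhds hx)
  have hθy : Tendsto (fun i => θ (y i)) atTop (nhds (θ x)) :=
    (hθ x hx).tendsto.comp (tendsto_nhdsWithin_iff.2 ⟨hy, hyD⟩)
  have hc_eq : ∀ᶠ i in atTop, θ (uEval b p x) - (if b then -1 else 1) * θ (y i) = c i := by
    filter_upwards [hyD, hconv.1] with i hi hb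
    have := hc i (y i) hi
    rw [hb, uEval_add_uShift] at this
    linarith
  exact (tendsto_const_nhds.sub (tendsto_const_nhds.mul hθy)).congr' hc_eq

/-- Limits of respected moves: if `θ` is continuous on the open interval `D`
and respects all `γ^i|_D` where `γ^i → γ`, then `θ` respects `γ|_D`. -/
theorem respects_limit_move (D : Set ℝ) (hD : Move.ValidDom D)
    (θ : ℝ → ℝ) (hθ : ContinuousOn θ D)
    (γ : ℕ → Bool × ℝ) (b : Bool) (p : ℝ) (hconv : ConvergesTo γ b p)
    (hresp : ∀ i, Respects θ (Move.mk' (γ i).1 (γ i).2 D)) :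
    Respects θ (Move.mk' b p D) := by
  choose c hc using fun i => (respects_mk'_iff θ _ _ D).1 (hresp i)
  obtain ⟨a, ha⟩ := exists_forall_eq_of_tendsto fun x hx =>
    hconv.tendsto_respects_const hD.1 hθ hc hx
  exact (respects_mk'_iff θ b p D).2 ⟨a, fun x hx => by linarith [ha x hx]⟩
end
end
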